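/- arXiv:2408.00442 — 2 statements merged into one kernel-verified Lean document; each statement's English description precedes it below -/
import Mathlib

section
/- Let q be a positive even integer and k = 2q − 1. Suppose W is a real (2q) × (2k) matrix with entries in {0,1} satisfying: (R1) W_{1,j} = 1 and W_{1,j+k} = 0 for all 1 ≤ j ≤ k; (R6) each row i with 2 ≤ i ≤ 2q has exactly q − 1 entries equal to 1 among its first k columns; (R4) W_{i,j+k} = 1 − W_{i,j} for all 2 ≤ i ≤ 2q and 1 ≤ j ≤ k; and (R5') for any two distinct rows i, l with 2 ≤ i, l ≤ 2q, the number of columns j ∈ {1,…,k} with W_{i,j} = W_{l,j} = 1 equals q/2 − 1. Then W has full rank 2q over ℚ. -/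
/-!
The Gram matrix of `W` is `q • 1 + (q - 1) • J`, where `J` is the all-ones matrix: rows `i ≠ 0`
are `(x, 1 - x)` with `x` a 0/1 vector of weight `q - 1`, so each row has squared length
`2q - 1` and two such rows meet in `2 (q/2 - 1) + (2q - 1) - 2 (q - 1) = q - 1` places, which is
also how the first row `(1, 0)` meets every other row. A matrix `c • 1 + d • J` of size `n` is
invertible as soon as `c ≠ 0` and `c + n d ≠ 0`, so `W` has a right inverse.
-/

open Matrix Finset

section ZeroOne

variable {R : Type*} [Semiring R] {ι : Type*} [Fintype ι] {x y : ι → R}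

theorem sum_eq_card_of_forall_eq_zero_or_one (hx : ∀ j, x j = 0 ∨ x j = 1) :
    ∑ j, x j = Nat.card {j // x j = 1} := by
  classical
  rw [Nat.card_eq_fintype_card, Fintype.card_subtype, ← sum_boole]
  refine Fintype.sum_congr _ _ fun j => ?_
  split_ifs with h
  · exact h
  · exact (hx j).resolve_right h

theorem dotProduct_eq_card_of_forall_eq_zero_or_one (hx : ∀ j, x j = 0 ∨ x j = 1)
    (hy : ∀ j, y j = 0 ∨ y j = 1) :
    x ⬝ᵥ y = Nat.card {j // x j = 1 ∧ y j = 1} := by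
  classical
  rw [Nat.card_eq_fintype_card, Fintype.card_subtype, ← sum_boole]
  refine Fintype.sum_congr _ _ fun j => ?_
  rcases hx j with h | h <;> rcases hy j with h' | h' <;> split_ifs with hc <;>
    simp_all

theorem dotProduct_self_of_forall_eq_zero_or_one (hx : ∀ j, x j = 0 ∨ x j = 1) :
    x ⬝ᵥ x = ∑ j, x j :=
  Fintype.sum_congr _ _ fun j => by rcases hx j with h | h <;> simp [h]

end ZeroOne

section SumElim

variable {R : Type*} [CommRing R] {ι : Type*} [Fintype ι]

theorem sum_elim_one_sub_dotProduct_sum_elim_one_sub (x y : ι → R) :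
    Sum.elim x (1 - x) ⬝ᵥ Sum.elim y (1 - y) =
      2 * (x ⬝ᵥ y) + Fintype.card ι - ∑ j, x j - ∑ j, y j := by
  simp only [dotProduct, Fintype.sum_sum_type, Sum.elim_inl, Sum.elim_inr, Pi.sub_apply,
    Pi.one_apply, sub_mul, mul_sub, one_mul, mul_one, sum_sub_distrib, sum_const, card_univ,
    nsmul_eq_mul]
  ring

theorem sum_elim_one_zero_dotProduct_sum_elim_one_sub (y : ι → R) :
    Sum.elim (1 : ι → R) (0 : ι → R) ⬝ᵥ Sum.elim y (1 - y) = ∑ j, y j := by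
  simp [dotProduct, Fintype.sum_sum_type]

theorem sum_elim_one_zero_dotProduct_self :
    Sum.elim (1 : ι → R) (0 : ι → R) ⬝ᵥ Sum.elim (1 : ι → R) (0 : ι → R) = Fintype.card ι := by
  simp [dotProduct, Fintype.sum_sum_type]

theorem mul_transpose_eq_of_rows_sum_elim {m : Type*} [Fintype m] [DecidableEq m]
    (W : Matrix m (ι ⊕ ι) R) (i₀ : m) (x : m → ι → R) (s t : R)
    (hrow₀ : W i₀ = Sum.elim (1 : ι → R) (0 : ι → R))
    (hrow : ∀ i ≠ i₀, W i = Sum.elim (x i) (1 - x i))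
    (hsum : ∀ i ≠ i₀, ∑ j, x i j = s) (hself : ∀ i ≠ i₀, x i ⬝ᵥ x i = s)
    (hdot : ∀ i ≠ i₀, ∀ l ≠ i₀, i ≠ l → x i ⬝ᵥ x l = t)
    (hst : 2 * t + Fintype.card ι - 2 * s = s) :
    W * Wᵀ = (Fintype.card ι - s) • 1 + s • of fun _ _ => 1 := by
  ext i l
  change W i ⬝ᵥ W l = _
  simp only [Matrix.add_apply, Matrix.smul_apply, one_apply, of_apply, smul_eq_mul, mul_ite,
    mul_one, mul_zero]
  by_cases hi : i = i₀ <;> by_cases hl : l = i₀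
  · subst hi hl
    rw [hrow₀, sum_elim_one_zero_dotProduct_self, if_pos rfl]
    ring
  · subst hi
    rw [hrow₀, hrow l hl, sum_elim_one_zero_dotProduct_sum_elim_one_sub, hsum l hl,
      if_neg (Ne.symm hl)]
    ring
  · subst hl
    rw [hrow i hi, hrow₀, dotProduct_comm, sum_elim_one_zero_dotProduct_sum_elim_one_sub,
      hsum i hi, if_neg hi]
    ring
  · rw [hrow i hi, hrow l hl, sum_elim_one_sub_dotProduct_sum_elim_one_sub, hsum i hi, hsum l hl]
    split_ifs with hil
    · subst hil
      rw [hself i hi]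
      ring
    · rw [hdot i hi l hl hil]
      linear_combination hst

end SumElim

theorem of_one_mul_of_one {R m : Type*} [NonAssocSemiring R] [Fintype m] :
    (of fun _ _ => 1 : Matrix m m R) * of (fun _ _ => 1) =
      (Fintype.card m : R) • of fun _ _ => 1 := by
  ext
  simp [mul_apply]

section Field

variable {K : Type*} [Field K] {m n : Type*} [Fintype m] [Fintype n] [DecidableEq m]

theorem smul_one_add_smul_of_one_mul_inv {c d : K} (hc : c ≠ 0)
    (hcd : c + d * Fintype.card m ≠ 0) :
    (c • 1 + d • of fun _ _ => 1 : Matrix m m K) *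
      (c⁻¹ • (1 - (d / (c + d * Fintype.card m)) • of fun _ _ => 1)) = 1 := by
  have key : c⁻¹ * (d - c * (d / (c + d * Fintype.card m)) -
      d * (d / (c + d * Fintype.card m)) * Fintype.card m) = 0 := by
    field_simp
    ring
  simp only [Matrix.mul_smul, Matrix.add_mul, Matrix.mul_sub, Matrix.smul_mul, of_one_mul_of_one,
    Matrix.one_mul, Matrix.mul_one]
  linear_combination (norm := module)
    key • (of fun _ _ => 1 : Matrix m m K) + mul_inv_cancel₀ hc • (1 : Matrix m m K)

theorem rank_eq_card_of_mul_eq_one {A : Matrix m n K} {B : Matrix n m K} (h : A * B = 1) :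
    A.rank = Fintype.card m :=
  le_antisymm A.rank_le_card_height (by simpa [h] using A.rank_mul_le_left B)

theorem rank_eq_card_of_mul_transpose_eq {W : Matrix m n K} {c d : K}
    (hW : W * Wᵀ = c • 1 + d • of fun _ _ => 1) (hc : c ≠ 0) (hcd : c + d * Fintype.card m ≠ 0) :
    W.rank = Fintype.card m := by
  have hinv := smul_one_add_smul_of_one_mul_inv hc hcd
  rw [← hW, Matrix.mul_assoc] at hinv
  exact rank_eq_card_of_mul_eq_one hinv

end Field

theorem stmt_6 (q : ℕ) (hq : 0 < q) (hqe : Even q) (k : ℕ) (hk : k = 2 * q - 1)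
    (W : Matrix (Fin (2 * q)) (Fin k ⊕ Fin k) ℚ)
    (h01 : ∀ i j, W i j = 0 ∨ W i j = 1)
    (hR1 : ∀ j : Fin k, W ⟨0, by omega⟩ (Sum.inl j) = 1 ∧ W ⟨0, by omega⟩ (Sum.inr j) = 0)
    (hR6 : ∀ i : Fin (2 * q), (i : ℕ) ≠ 0 →
      Nat.card {j : Fin k // W i (Sum.inl j) = 1} = q - 1)
    (hR4 : ∀ i : Fin (2 * q), (i : ℕ) ≠ 0 → ∀ j : Fin k,
      W i (Sum.inr j) = 1 - W i (Sum.inl j))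
    (hR5 : ∀ i l : Fin (2 * q), (i : ℕ) ≠ 0 → (l : ℕ) ≠ 0 → i ≠ l →
      Nat.card {j : Fin k // W i (Sum.inl j) = 1 ∧ W l (Sum.inl j) = 1} = q / 2 - 1) :
    W.rank = 2 * q := by
  have hkQ : (k : ℚ) = 2 * q - 1 := by
    subst hk
    push_cast [Nat.cast_sub (by omega : 1 ≤ 2 * q)]
    ring
  have hhalf : ((q / 2 - 1 : ℕ) : ℚ) = q / 2 - 1 := by
    obtain ⟨r, rfl⟩ := hqe
    rw [← two_mul, Nat.mul_div_cancel_left r two_pos, Nat.cast_sub (by omega)]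
    push_cast
    ring
  let i₀ : Fin (2 * q) := ⟨0, by omega⟩
  have hne : ∀ i ≠ i₀, (i : ℕ) ≠ 0 := fun i hi h => hi (Fin.ext h)
  let x : Fin (2 * q) → Fin k → ℚ := fun i j => W i (Sum.inl j)
  have hx01 : ∀ i j, x i j = 0 ∨ x i j = 1 := fun i j => h01 i (Sum.inl j)
  have hsum : ∀ i ≠ i₀, ∑ j, x i j = q - 1 := fun i hi => by
    rw [sum_eq_card_of_forall_eq_zero_or_one (hx01 i), hR6 i (hne i hi), Nat.cast_sub hq,
      Nat.cast_one]
  have hGram := mul_transpose_eq_of_rows_sum_elim W i₀ x ((q : ℚ) - 1) ((q : ℚ) / 2 - 1)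
    (funext <| Sum.rec (fun j => (hR1 j).1) (fun j => (hR1 j).2))
    (fun i hi => funext <| Sum.rec (fun _ => rfl) (fun j => hR4 i (hne i hi) j))
    hsum (fun i hi => (dotProduct_self_of_forall_eq_zero_or_one (hx01 i)).trans (hsum i hi))
    (fun i hi l hl hil => by
      rw [dotProduct_eq_card_of_forall_eq_zero_or_one (hx01 i) (hx01 l),
        hR5 i l (hne i hi) (hne l hl) hil, hhalf])
    (by rw [Fintype.card_fin, hkQ]; ring)
  rw [Fintype.card_fin, hkQ] at hGram
  have hq' : (1 : ℚ) ≤ q := by exact_mod_cast hq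
  simpa using rank_eq_card_of_mul_transpose_eq hGram (by linarith) (by nlinarith)
end

section
/- Let n ≥ 2, α a generator of 𝔽_{2ⁿ}^*, and H_j = {x : Tr(α^j x) = 0}. For any two distinct nonzero elements x, y ∈ 𝔽_{2ⁿ}, the number of indices j ∈ {0, …, 2ⁿ−2} such that both x ∈ H_j and y ∈ H_j equals 2^{n−2} − 1. -/
/-! The trace form of a finite field extension is nondegenerate, so the common zeros of
`z ↦ Tr (z * x)` and `z ↦ Tr (z * y)` form the orthogonal of the plane spanned by `x` and `y`;
over `𝔽₂` two distinct nonzero vectors are independent, so this orthogonal has dimension `n - 2`.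
Removing `z = 0` and enumerating `𝔽_{2ⁿ}^*` as the powers of the primitive element `α` gives
the count `2^(n-2) - 1`. -/

open Module

theorem LinearMap.BilinForm.mem_orthogonal_span_iff {R M : Type*} [CommRing R] [AddCommGroup M]
    [Module R M] (B : LinearMap.BilinForm R M) {s : Set M} {m : M} :
    m ∈ B.orthogonal (Submodule.span R s) ↔ ∀ n ∈ s, B n m = 0 :=
  ⟨fun h n hn => h n (Submodule.subset_span hn),
    fun h _ hn => Submodule.span_le (p := LinearMap.ker (B.flip m)).2 h hn⟩

theorem linearIndependent_pair_of_ne {M : Type*} [AddCommGroup M] [Module (ZMod 2) M] {x y : M}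
    (hx : x ≠ 0) (hy : y ≠ 0) (hxy : x ≠ y) : LinearIndependent (ZMod 2) ![x, y] := by
  rw [LinearIndependent.pair_iff]
  have hneg : -y = y := by
    rw [← neg_one_smul (ZMod 2) y, show (-1 : ZMod 2) = 1 by decide, one_smul]
  have key : ∀ s : ZMod 2, s = 0 ∨ s = 1 := by decide
  intro s t h
  rcases key s with rfl | rfl <;> rcases key t with rfl | rfl <;> simp_all
  exact hxy (hneg ▸ eq_neg_of_add_eq_zero_left h)

theorem Nat.card_subtype_ne_and {α : Type*} [Finite α] {P : α → Prop} {a : α} (ha : P a) :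
    Nat.card {b // b ≠ a ∧ P b} = Nat.card {b // P b} - 1 := by
  classical
  have := Fintype.ofFinite α
  simp only [Nat.card_eq_fintype_card, Fintype.card_subtype]
  rw [← Finset.card_erase_of_mem (by simpa using ha)]
  congr 1; ext; simp [and_comm]

section FiniteFieldTrace

variable {K L : Type*} [Field K] [Field L] [Finite L] [Algebra K L]

theorem natCard_traceForm_orthogonal (W : Submodule K L) :
    Nat.card ((Algebra.traceForm K L).orthogonal W) = Nat.card K ^ (finrank K L - finrank K W) := by
  rw [Module.natCard_eq_pow_finrank (K := K),
    LinearMap.BilinForm.finrank_orthogonal (traceForm_nondegenerate K L)]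

theorem natCard_trace_mul_eq_zero_pair {x y : L} (hxy : LinearIndependent K ![x, y]) :
    Nat.card {z : L // Algebra.trace K L (z * x) = 0 ∧ Algebra.trace K L (z * y) = 0} =
      Nat.card K ^ (finrank K L - 2) := by
  have hW : finrank K (Submodule.span K (Set.range ![x, y])) = 2 := by
    simpa using finrank_span_eq_card hxy
  rw [← hW, ← natCard_traceForm_orthogonal]
  refine Nat.card_congr (Equiv.subtypeEquivRight fun z => ?_)
  simp only [LinearMap.BilinForm.mem_orthogonal_span_iff, Set.forall_mem_range, Fin.forall_fin_two,
    Algebra.traceForm_apply, Matrix.cons_val_zero, Matrix.cons_val_one, mul_comm z]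

end FiniteFieldTrace

theorem natCard_subtype_fin_orderOf_pow {K : Type*} [GroupWithZero K] [Finite K] {α : K}
    (hα : orderOf α = Nat.card K - 1) (P : K → Prop) :
    Nat.card {j : Fin (orderOf α) // P (α ^ (j : ℕ))} = Nat.card {a : K // a ≠ 0 ∧ P a} := by
  let f : Fin (orderOf α) → {a : K // a ≠ 0} := fun j =>
    ⟨α ^ (j : ℕ), ((orderOf_pos_iff.1 j.pos).isUnit.pow j).ne_zero⟩
  have hf : Function.Bijective f := by
    refine Function.Injective.bijective_of_nat_card_le (fun i j hij => Fin.ext ?_) ?_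
    · exact pow_injOn_Iio_orderOf i.isLt j.isLt (congrArg Subtype.val hij)
    · rw [← Nat.card_congr unitsEquivNeZero, Nat.card_units, Nat.card_fin, hα]
  exact Nat.card_congr (((Equiv.ofBijective f hf).subtypeEquiv fun _ => Iff.rfl).trans
    (Equiv.subtypeSubtypeEquivSubtypeInter _ P))

theorem stmt_13_general (n : ℕ) (hn : 2 ≤ n)
    (Tr : GaloisField 2 n → GaloisField 2 n)
    (hTr : ∀ β, Tr β = ∑ i ∈ Finset.range n, β ^ (2 ^ i))
    (α : GaloisField 2 n) (hαord : orderOf α = 2 ^ n - 1)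
    (x y : GaloisField 2 n) (hx : x ≠ 0) (hy : y ≠ 0) (hxy : x ≠ y) :
    Nat.card {j : Fin (2 ^ n - 1) //
      Tr (α ^ (j : ℕ) * x) = 0 ∧ Tr (α ^ (j : ℕ) * y) = 0} = 2 ^ (n - 2) - 1 := by
  have hn0 : n ≠ 0 := by omega
  have hfinrank := GaloisField.finrank 2 hn0
  have hTr_eq_zero (β) : Tr β = 0 ↔ Algebra.trace (ZMod 2) _ β = 0 := by
    have := FiniteField.algebraMap_trace_eq_sum_pow (ZMod 2) (GaloisField 2 n) β
    rw [hfinrank, Nat.card_zmod] at this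
    rw [hTr, ← this, FaithfulSMul.algebraMap_eq_zero_iff]
  have hxy' : LinearIndependent (ZMod 2) ![x, y] := linearIndependent_pair_of_ne hx hy hxy
  have hker := natCard_trace_mul_eq_zero_pair hxy'
  rw [hfinrank, Nat.card_zmod] at hker
  simp only [hTr_eq_zero]
  rw [← hαord, natCard_subtype_fin_orderOf_pow (hαord.trans (by rw [GaloisField.card 2 n hn0]))
      fun a => Algebra.trace (ZMod 2) _ (a * x) = 0 ∧ Algebra.trace (ZMod 2) _ (a * y) = 0,
    Nat.card_subtype_ne_and (by simp)]
  exact congrArg (· - 1) hker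

theorem stmt_13 (n : ℕ) (hn : 2 ≤ n)
    (Tr : GaloisField 2 n → GaloisField 2 n)
    (hTr : ∀ β, Tr β = ∑ i ∈ Finset.range n, β ^ (2 ^ i))
    (α : GaloisField 2 n) (hα0 : α ≠ 0) (hαord : orderOf α = 2 ^ n - 1)
    (x y : GaloisField 2 n) (hx : x ≠ 0) (hy : y ≠ 0) (hxy : x ≠ y) :
    Nat.card {j : Fin (2 ^ n - 1) //
      Tr (α ^ (j : ℕ) * x) = 0 ∧ Tr (α ^ (j : ℕ) * y) = 0} = 2 ^ (n - 2) - 1 :=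
  stmt_13_general n hn Tr hTr α hαord x y hx hy hxy
end
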